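/- Let 0 < q ≤ 1 and φ ∈ ℝ, and work in SU_{q,φ}(2). Define E₁ := (1+q²) q⁻¹ e^{4iφ} c⋆ a⋆, E₀ := 1 − (1+q²) c⋆ c, E₋₁ := (1+q²) q⁻¹ e^{−4iφ} a c, and set λ := 1 − q⁴, ρ := 1 + q². Then these elements satisfy the Podleś sphere relations: (1+q²) E₀ E₁ − q²(1+q²) E₁ E₀ = λ E₁; q² (E₁ E₋₁ − E₋₁ E₁) + (1 − q⁴) E₀ E₀ = λ E₀; (1+q²) E₋₁ E₀ − q²(1+q²) E₀ E₋₁ = λ E₋₁; and E₋₁ E₁ + (1+q²) E₀ E₀ + q² E₁ E₋₁ = ρ · 1. -/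

import Mathlib

noncomputable section

open Complex

/-- The defining relations of `SU_{q,φ}(2)` on the free `ℂ`-algebra with four generators
`a = ι 0`, `a⋆ = ι 1`, `c = ι 2`, `c⋆ = ι 3`. -/
inductive SUqRel (q φ : ℝ) : FreeAlgebra ℂ (Fin 4) → FreeAlgebra ℂ (Fin 4) → Prop
  | ac : SUqRel q φ (FreeAlgebra.ι ℂ 0 * FreeAlgebra.ι ℂ 2)
      (((q : ℂ) * Complex.exp (4 * Complex.I * (φ : ℂ))) •
        (FreeAlgebra.ι ℂ 2 * FreeAlgebra.ι ℂ 0))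
  | acs : SUqRel q φ (FreeAlgebra.ι ℂ 0 * FreeAlgebra.ι ℂ 3)
      (((q : ℂ) * Complex.exp (-4 * Complex.I * (φ : ℂ))) •
        (FreeAlgebra.ι ℂ 3 * FreeAlgebra.ι ℂ 0))
  | cas : SUqRel q φ (FreeAlgebra.ι ℂ 2 * FreeAlgebra.ι ℂ 1)
      (((q : ℂ) * Complex.exp (4 * Complex.I * (φ : ℂ))) •
        (FreeAlgebra.ι ℂ 1 * FreeAlgebra.ι ℂ 2))
  | csas : SUqRel q φ (FreeAlgebra.ι ℂ 3 * FreeAlgebra.ι ℂ 1)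
      (((q : ℂ) * Complex.exp (-4 * Complex.I * (φ : ℂ))) •
        (FreeAlgebra.ι ℂ 1 * FreeAlgebra.ι ℂ 3))
  | unitary₁ : SUqRel q φ
      (FreeAlgebra.ι ℂ 0 * FreeAlgebra.ι ℂ 1 +
        ((q : ℂ) ^ 2) • (FreeAlgebra.ι ℂ 3 * FreeAlgebra.ι ℂ 2)) 1
  | unitary₂ : SUqRel q φ
      (FreeAlgebra.ι ℂ 1 * FreeAlgebra.ι ℂ 0 + FreeAlgebra.ι ℂ 2 * FreeAlgebra.ι ℂ 3) 1
  | ccs : SUqRel q φ (FreeAlgebra.ι ℂ 2 * FreeAlgebra.ι ℂ 3)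
      (FreeAlgebra.ι ℂ 3 * FreeAlgebra.ι ℂ 2)

/-- The braided quantum group `SU_{q,φ}(2)` as a quotient of the free algebra. -/
def SUq2 (q φ : ℝ) : Type := RingQuot (SUqRel q φ)

instance (q φ : ℝ) : Ring (SUq2 q φ) := inferInstanceAs (Ring (RingQuot (SUqRel q φ)))

instance (q φ : ℝ) : Algebra ℂ (SUq2 q φ) :=
  inferInstanceAs (Algebra ℂ (RingQuot (SUqRel q φ)))

/-- The generator `a` of `SU_{q,φ}(2)`. -/
def SUq2.a (q φ : ℝ) : SUq2 q φ := RingQuot.mkAlgHom ℂ (SUqRel q φ) (FreeAlgebra.ι ℂ 0)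

/-- The generator `a⋆` of `SU_{q,φ}(2)`. -/
def SUq2.aStar (q φ : ℝ) : SUq2 q φ := RingQuot.mkAlgHom ℂ (SUqRel q φ) (FreeAlgebra.ι ℂ 1)

/-- The generator `c` of `SU_{q,φ}(2)`. -/
def SUq2.c (q φ : ℝ) : SUq2 q φ := RingQuot.mkAlgHom ℂ (SUqRel q φ) (FreeAlgebra.ι ℂ 2)

/-- The generator `c⋆` of `SU_{q,φ}(2)`. -/
def SUq2.cStar (q φ : ℝ) : SUq2 q φ := RingQuot.mkAlgHom ℂ (SUqRel q φ) (FreeAlgebra.ι ℂ 3)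

/-- `E₁ := (1+q²) q⁻¹ e^{4iφ} c⋆ a⋆`. -/
def SUq2.E₁ (q φ : ℝ) : SUq2 q φ :=
  ((1 + (q : ℂ) ^ 2) * (q : ℂ)⁻¹ * Complex.exp (4 * Complex.I * (φ : ℂ))) •
    (SUq2.cStar q φ * SUq2.aStar q φ)

/-- `E₀ := 1 − (1+q²) c⋆ c`. -/
def SUq2.E₀ (q φ : ℝ) : SUq2 q φ :=
  1 - (1 + (q : ℂ) ^ 2) • (SUq2.cStar q φ * SUq2.c q φ)

/-- `E₋₁ := (1+q²) q⁻¹ e^{−4iφ} a c`. -/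
def SUq2.Eneg (q φ : ℝ) : SUq2 q φ :=
  ((1 + (q : ℂ) ^ 2) * (q : ℂ)⁻¹ * Complex.exp (-4 * Complex.I * (φ : ℂ))) •
    (SUq2.a q φ * SUq2.c q φ)

/-! With `N := c⋆c`, the commutation relations make `N` `q²`-commute with `E₁` and `E₋₁`
(`N E₁ = q² E₁ N`, `E₋₁ N = q² N E₋₁`), while the unitarity relations turn `E₁ E₋₁` and `E₋₁ E₁`
into polynomials in `N`; the phases `e^{±4iφ}` cancel in pairs. Since `E₀ = 1 − (1+q²) N`, each
Podleś relation becomes an identity between polynomials in `N` (for the first and third, with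
`E₁` resp. `E₋₁` as a factor), which is checked coefficientwise. -/
namespace SUq2

variable {q φ : ℝ}

theorem a_mul_c :
    a q φ * c q φ = ((q : ℂ) * exp (4 * I * φ)) • (c q φ * a q φ) := by
  have h := RingQuot.mkAlgHom_rel ℂ (SUqRel.ac (q := q) (φ := φ))
  simp only [map_mul, map_smul] at h
  exact h

theorem a_mul_cStar :
    a q φ * cStar q φ = ((q : ℂ) * exp (-4 * I * φ)) • (cStar q φ * a q φ) := by
  have h := RingQuot.mkAlgHom_rel ℂ (SUqRel.acs (q := q) (φ := φ))
  simp only [map_mul, map_smul] at h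
  exact h

theorem c_mul_aStar :
    c q φ * aStar q φ = ((q : ℂ) * exp (4 * I * φ)) • (aStar q φ * c q φ) := by
  have h := RingQuot.mkAlgHom_rel ℂ (SUqRel.cas (q := q) (φ := φ))
  simp only [map_mul, map_smul] at h
  exact h

theorem cStar_mul_aStar :
    cStar q φ * aStar q φ = ((q : ℂ) * exp (-4 * I * φ)) • (aStar q φ * cStar q φ) := by
  have h := RingQuot.mkAlgHom_rel ℂ (SUqRel.csas (q := q) (φ := φ))
  simp only [map_mul, map_smul] at h
  exact h

theorem c_mul_cStar : c q φ * cStar q φ = cStar q φ * c q φ := by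
  have h := RingQuot.mkAlgHom_rel ℂ (SUqRel.ccs (q := q) (φ := φ))
  simp only [map_mul] at h
  exact h

theorem a_mul_aStar : a q φ * aStar q φ = 1 - ((q : ℂ) ^ 2) • (cStar q φ * c q φ) := by
  have h := RingQuot.mkAlgHom_rel ℂ (SUqRel.unitary₁ (q := q) (φ := φ))
  simp only [map_add, map_mul, map_smul, map_one] at h
  exact eq_sub_of_add_eq h

theorem aStar_mul_a : aStar q φ * a q φ = 1 - cStar q φ * c q φ := by
  have h := RingQuot.mkAlgHom_rel ℂ (SUqRel.unitary₂ (q := q) (φ := φ))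
  simp only [map_add, map_mul, map_one] at h
  exact c_mul_cStar (q := q) ▸ eq_sub_of_add_eq h

theorem exp_neg_mul_exp (φ : ℝ) : exp (-4 * I * φ) * exp (4 * I * φ) = 1 := by
  rw [← exp_add, ← exp_zero]
  ring_nf

def cStarC (q φ : ℝ) : SUq2 q φ := cStar q φ * c q φ

theorem E₀_eq : E₀ q φ = 1 - (1 + (q : ℂ) ^ 2) • cStarC q φ := rfl

theorem commute_cStarC_c : Commute (cStarC q φ) (c q φ) := by
  change cStar q φ * c q φ * c q φ = c q φ * (cStar q φ * c q φ)
  rw [← mul_assoc, c_mul_cStar]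

theorem commute_cStarC_cStar : Commute (cStarC q φ) (cStar q φ) := by
  change cStar q φ * c q φ * cStar q φ = cStar q φ * (cStar q φ * c q φ)
  rw [mul_assoc, c_mul_cStar]

theorem a_mul_cStarC : a q φ * cStarC q φ = ((q : ℂ) ^ 2) • (cStarC q φ * a q φ) := by
  rw [cStarC, ← mul_assoc, a_mul_cStar, smul_mul_assoc, mul_assoc (cStar q φ), a_mul_c,
    mul_smul_comm, smul_smul, ← mul_assoc (cStar q φ)]
  congr 1
  linear_combination (q : ℂ) ^ 2 * exp_neg_mul_exp φ

theorem cStarC_mul_aStar : cStarC q φ * aStar q φ = ((q : ℂ) ^ 2) • (aStar q φ * cStarC q φ) := by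
  rw [cStarC, mul_assoc (cStar q φ), c_mul_aStar, mul_smul_comm, ← mul_assoc (cStar q φ),
    cStar_mul_aStar, smul_mul_assoc, smul_smul, mul_assoc (aStar q φ)]
  congr 1
  linear_combination (q : ℂ) ^ 2 * exp_neg_mul_exp φ

theorem cStarC_mul_E₁ : cStarC q φ * E₁ q φ = ((q : ℂ) ^ 2) • (E₁ q φ * cStarC q φ) := by
  rw [E₁, mul_smul_comm, smul_mul_assoc, smul_comm ((q : ℂ) ^ 2)]
  congr 1
  rw [← mul_assoc, commute_cStarC_cStar.eq, mul_assoc, cStarC_mul_aStar, mul_smul_comm,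
    ← mul_assoc]

theorem Eneg_mul_cStarC : Eneg q φ * cStarC q φ = ((q : ℂ) ^ 2) • (cStarC q φ * Eneg q φ) := by
  rw [Eneg, mul_smul_comm, smul_mul_assoc, smul_comm ((q : ℂ) ^ 2)]
  congr 1
  rw [mul_assoc, ← commute_cStarC_c.eq, ← mul_assoc, a_mul_cStarC, smul_mul_assoc, mul_assoc]

theorem E₁_mul_Eneg :
    E₁ q φ * Eneg q φ =
      ((1 + (q : ℂ) ^ 2) * (q : ℂ)⁻¹) ^ 2 • (cStarC q φ - cStarC q φ * cStarC q φ) := by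
  rw [E₁, Eneg, smul_mul_smul_comm]
  congr 1
  · linear_combination ((1 + (q : ℂ) ^ 2) * (q : ℂ)⁻¹) ^ 2 * exp_neg_mul_exp φ
  · calc cStar q φ * aStar q φ * (a q φ * c q φ) = cStar q φ * (aStar q φ * a q φ) * c q φ := by
          simp only [mul_assoc]
      _ = cStarC q φ - cStarC q φ * cStarC q φ := by
          rw [aStar_mul_a, ← cStarC, mul_sub, sub_mul, mul_one, mul_assoc, commute_cStarC_c.eq,
            ← mul_assoc]
          rfl

theorem Eneg_mul_E₁ :
    Eneg q φ * E₁ q φ = ((1 + (q : ℂ) ^ 2) * (q : ℂ)⁻¹) ^ 2 •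
      ((q : ℂ) ^ 2) • (cStarC q φ - ((q : ℂ) ^ 2) • (cStarC q φ * cStarC q φ)) := by
  rw [Eneg, E₁, smul_mul_smul_comm]
  congr 1
  · linear_combination ((1 + (q : ℂ) ^ 2) * (q : ℂ)⁻¹) ^ 2 * exp_neg_mul_exp φ
  · calc a q φ * c q φ * (cStar q φ * aStar q φ) = a q φ * (c q φ * cStar q φ) * aStar q φ := by
          simp only [mul_assoc]
      _ = ((q : ℂ) ^ 2) • (cStarC q φ - ((q : ℂ) ^ 2) • (cStarC q φ * cStarC q φ)) := by
          rw [c_mul_cStar, ← cStarC, a_mul_cStarC, smul_mul_assoc, mul_assoc, a_mul_aStar, ← cStarC,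
            mul_sub, mul_one, mul_smul_comm]

theorem podles_E₀_E₁ :
    (1 + (q : ℂ) ^ 2) • (E₀ q φ * E₁ q φ) -
        ((q : ℂ) ^ 2 * (1 + (q : ℂ) ^ 2)) • (E₁ q φ * E₀ q φ) =
      (1 - (q : ℂ) ^ 4) • E₁ q φ := by
  simp only [E₀_eq, sub_mul, mul_sub, one_mul, mul_one, smul_mul_assoc, mul_smul_comm,
    cStarC_mul_E₁, smul_sub, smul_smul]
  match_scalars <;> ring

theorem podles_Eneg_E₀ :
    (1 + (q : ℂ) ^ 2) • (Eneg q φ * E₀ q φ) -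
        ((q : ℂ) ^ 2 * (1 + (q : ℂ) ^ 2)) • (E₀ q φ * Eneg q φ) =
      (1 - (q : ℂ) ^ 4) • Eneg q φ := by
  simp only [E₀_eq, sub_mul, mul_sub, one_mul, mul_one, smul_mul_assoc, mul_smul_comm,
    Eneg_mul_cStarC, smul_sub, smul_smul]
  match_scalars <;> ring

theorem podles_E₁_Eneg (hq : (q : ℂ) ≠ 0) :
    ((q : ℂ) ^ 2) • (E₁ q φ * Eneg q φ - Eneg q φ * E₁ q φ) +
        (1 - (q : ℂ) ^ 4) • (E₀ q φ * E₀ q φ) =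
      (1 - (q : ℂ) ^ 4) • E₀ q φ := by
  simp only [E₁_mul_Eneg, Eneg_mul_E₁, E₀_eq, sub_mul, mul_sub, one_mul, mul_one, smul_mul_assoc,
    mul_smul_comm, smul_sub, smul_smul]
  match_scalars <;> field_simp <;> ring

theorem podles_sphere (hq : (q : ℂ) ≠ 0) :
    Eneg q φ * E₁ q φ + (1 + (q : ℂ) ^ 2) • (E₀ q φ * E₀ q φ) +
        ((q : ℂ) ^ 2) • (E₁ q φ * Eneg q φ) =
      (1 + (q : ℂ) ^ 2) • (1 : SUq2 q φ) := by
  simp only [E₁_mul_Eneg, Eneg_mul_E₁, E₀_eq, sub_mul, mul_sub, one_mul, mul_one, smul_mul_assoc,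
    mul_smul_comm, smul_sub, smul_smul]
  match_scalars <;> field_simp <;> ring

end SUq2

theorem podles_relations_in_SUq2_general (q φ : ℝ) (hq0 : 0 < q) :
    ((1 + (q : ℂ) ^ 2) • (SUq2.E₀ q φ * SUq2.E₁ q φ) -
        ((q : ℂ) ^ 2 * (1 + (q : ℂ) ^ 2)) • (SUq2.E₁ q φ * SUq2.E₀ q φ) =
      (1 - (q : ℂ) ^ 4) • SUq2.E₁ q φ) ∧
    (((q : ℂ) ^ 2) • (SUq2.E₁ q φ * SUq2.Eneg q φ - SUq2.Eneg q φ * SUq2.E₁ q φ) +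
        (1 - (q : ℂ) ^ 4) • (SUq2.E₀ q φ * SUq2.E₀ q φ) =
      (1 - (q : ℂ) ^ 4) • SUq2.E₀ q φ) ∧
    ((1 + (q : ℂ) ^ 2) • (SUq2.Eneg q φ * SUq2.E₀ q φ) -
        ((q : ℂ) ^ 2 * (1 + (q : ℂ) ^ 2)) • (SUq2.E₀ q φ * SUq2.Eneg q φ) =
      (1 - (q : ℂ) ^ 4) • SUq2.Eneg q φ) ∧
    (SUq2.Eneg q φ * SUq2.E₁ q φ + (1 + (q : ℂ) ^ 2) • (SUq2.E₀ q φ * SUq2.E₀ q φ) +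
        ((q : ℂ) ^ 2) • (SUq2.E₁ q φ * SUq2.Eneg q φ) =
      (1 + (q : ℂ) ^ 2) • (1 : SUq2 q φ)) := by
  have hq : (q : ℂ) ≠ 0 := by exact_mod_cast hq0.ne'
  exact ⟨SUq2.podles_E₀_E₁, SUq2.podles_E₁_Eneg hq, SUq2.podles_Eneg_E₀, SUq2.podles_sphere hq⟩

/-- The elements `E₁ = (1+q²)q⁻¹e^{4iφ} c⋆a⋆`, `E₀ = 1 − (1+q²)c⋆c`,
`E₋₁ = (1+q²)q⁻¹e^{−4iφ} ac` of `SU_{q,φ}(2)` satisfy the relations of the Podleś sphere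
with `λ = 1 − q⁴` and `ρ = 1 + q²`. -/
theorem podles_relations_in_SUq2 (q φ : ℝ) (hq0 : 0 < q) (hq1 : q ≤ 1) :
    ((1 + (q : ℂ) ^ 2) • (SUq2.E₀ q φ * SUq2.E₁ q φ) -
        ((q : ℂ) ^ 2 * (1 + (q : ℂ) ^ 2)) • (SUq2.E₁ q φ * SUq2.E₀ q φ) =
      (1 - (q : ℂ) ^ 4) • SUq2.E₁ q φ) ∧
    (((q : ℂ) ^ 2) • (SUq2.E₁ q φ * SUq2.Eneg q φ - SUq2.Eneg q φ * SUq2.E₁ q φ) +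
        (1 - (q : ℂ) ^ 4) • (SUq2.E₀ q φ * SUq2.E₀ q φ) =
      (1 - (q : ℂ) ^ 4) • SUq2.E₀ q φ) ∧
    ((1 + (q : ℂ) ^ 2) • (SUq2.Eneg q φ * SUq2.E₀ q φ) -
        ((q : ℂ) ^ 2 * (1 + (q : ℂ) ^ 2)) • (SUq2.E₀ q φ * SUq2.Eneg q φ) =
      (1 - (q : ℂ) ^ 4) • SUq2.Eneg q φ) ∧
    (SUq2.Eneg q φ * SUq2.E₁ q φ + (1 + (q : ℂ) ^ 2) • (SUq2.E₀ q φ * SUq2.E₀ q φ) +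
        ((q : ℂ) ^ 2) • (SUq2.E₁ q φ * SUq2.Eneg q φ) =
      (1 + (q : ℂ) ^ 2) • (1 : SUq2 q φ)) :=
  podles_relations_in_SUq2_general q φ hq0
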